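/- Let 0 < y < 1 and c > 0 be fixed, and define h(z) = ln((1-y^{zc})/(1-y^{z})) for z > 0. If 0 < c < 1 then h is concave on (0,∞), and if c > 1 then h is convex on (0,∞). -/

import Mathlib

/-!
With `g z = log (1 - y ^ z)` the function is `z ↦ g (z * c) - g z`, whose second derivative is
`((z * c) ^ 2 * g'' (z * c) - z ^ 2 * g'' z) / z ^ 2`. Its sign is therefore decided by the
monotonicity of `z ^ 2 * g'' z = -(w / sinh w) ^ 2`, where `w = -z log y / 2 > 0`; and `w / sinh w`
decreases because `sinh w / w` is a secant slope through the origin of `sinh`, which is convex on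
`[0, ∞)`.
-/

open Real Set

theorem convexOn_sinh_Ici : ConvexOn ℝ (Ici 0) sinh := by
  refine convexOn_of_deriv2_nonneg' (convex_Ici 0) differentiable_sinh.differentiableOn ?_ ?_
  · rw [Real.deriv_sinh]
    exact differentiable_cosh.differentiableOn
  · intro x hx
    simp only [Function.iterate_succ, Function.iterate_zero, Function.comp_apply, Function.id_def,
      Real.deriv_sinh, Real.deriv_cosh]
    exact sinh_nonneg_iff.2 hx

theorem antitoneOn_self_div_sinh : AntitoneOn (fun x => x / sinh x) (Ioi 0) := by
  intro x hx y hy hxy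
  have hslope := convexOn_sinh_Ici.monotoneOn_slope_gt self_mem_Ici
    ⟨mem_Ici.2 hx.le, hx⟩ ⟨mem_Ici.2 hy.le, hy⟩ hxy
  simp only [slope_def_field, sinh_zero, sub_zero] at hslope
  have hxs : 0 < sinh x / x := div_pos (sinh_pos_iff.2 hx) hx
  simpa only [inv_div] using inv_anti₀ hxs hslope

theorem one_sub_exp_neg_two_mul_sq (v : ℝ) :
    (1 - exp (-(2 * v))) ^ 2 = 4 * exp (-(2 * v)) * sinh v ^ 2 := by
  have h : exp v * exp (-v) = 1 := by rw [← exp_add, add_neg_cancel, exp_zero]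
  have h2 : exp (-(2 * v)) = exp (-v) ^ 2 := by rw [← exp_nat_mul]; ring_nf
  rw [h2, sinh_eq]
  linear_combination (-(1 + exp v * exp (-v) - 2 * exp (-v) ^ 2)) * h

theorem HasDerivAt.comp_mul_sub {G H : ℝ → ℝ} {G' H' c z : ℝ} (hG : HasDerivAt G G' (z * c))
    (hH : HasDerivAt H H' z) : HasDerivAt (fun z => G (z * c) - H z) (c * G' - H') z :=
  ((hG.comp z (hasDerivAt_mul_const c)).sub hH).congr_deriv (by ring)

section

variable {g g' g'' : ℝ → ℝ} {c : ℝ}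

theorem convexOn_comp_mul_sub (hg : ∀ x > 0, HasDerivAt g (g' x) x)
    (hg' : ∀ x > 0, HasDerivAt g' (g'' x) x) (hc : 0 < c)
    (h : ∀ z > 0, z ^ 2 * g'' z ≤ (z * c) ^ 2 * g'' (z * c)) :
    ConvexOn ℝ (Ioi 0) (fun z => g (z * c) - g z) := by
  have hd : ∀ z > 0, HasDerivAt (fun z => g (z * c) - g z) (c * g' (z * c) - g' z) z :=
    fun z hz => (hg _ (mul_pos hz hc)).comp_mul_sub (hg z hz)
  have hd' : ∀ z > 0, HasDerivAt (fun z => c * g' (z * c) - g' z)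
      (c * (c * g'' (z * c)) - g'' z) z :=
    fun z hz => ((hg' _ (mul_pos hz hc)).const_mul c).comp_mul_sub (hg' z hz)
  refine convexOn_of_hasDerivWithinAt2_nonneg (f' := fun z => c * g' (z * c) - g' z)
    (f'' := fun z => c * (c * g'' (z * c)) - g'' z) (convex_Ioi 0)
    (fun z hz => (hd z hz).continuousAt.continuousWithinAt) ?_ ?_ ?_ <;> rw [interior_Ioi]
  · exact fun z hz => (hd z hz).hasDerivWithinAt
  · exact fun z hz => (hd' z hz).hasDerivWithinAt
  · intro z hz
    have hz0 : z ≠ 0 := ne_of_gt hz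
    have hscale : c * (c * g'' (z * c)) - g'' z
        = ((z * c) ^ 2 * g'' (z * c) - z ^ 2 * g'' z) / z ^ 2 := by
      field_simp
    rw [hscale]
    exact div_nonneg (sub_nonneg.2 (h z hz)) (sq_nonneg z)

theorem concaveOn_comp_mul_sub (hg : ∀ x > 0, HasDerivAt g (g' x) x)
    (hg' : ∀ x > 0, HasDerivAt g' (g'' x) x) (hc : 0 < c)
    (h : ∀ z > 0, (z * c) ^ 2 * g'' (z * c) ≤ z ^ 2 * g'' z) :
    ConcaveOn ℝ (Ioi 0) (fun z => g (z * c) - g z) := by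
  have hneg := convexOn_comp_mul_sub (g'' := -g'') (fun x hx => (hg x hx).neg)
    (fun x hx => (hg' x hx).neg) hc (fun z hz => by simpa using h z hz)
  refine neg_convexOn_iff.1 (hneg.congr fun z _ => ?_)
  simp only [Pi.neg_apply]
  ring

end

section

variable {y : ℝ}

theorem one_sub_rpow_pos (hy0 : 0 < y) (hy1 : y < 1) {z : ℝ} (hz : 0 < z) : 0 < 1 - y ^ z :=
  sub_pos.2 (rpow_lt_one hy0.le hy1 hz)

theorem hasDerivAt_log_one_sub_rpow (hy0 : 0 < y) (hy1 : y < 1) {z : ℝ} (hz : 0 < z) :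
    HasDerivAt (fun z => log (1 - y ^ z)) (-(y ^ z * log y) / (1 - y ^ z)) z := by
  simpa [neg_div] using ((hasStrictDerivAt_const_rpow hy0 z).hasDerivAt.const_sub 1).log
    (one_sub_rpow_pos hy0 hy1 hz).ne'

theorem hasDerivAt_deriv_log_one_sub_rpow (hy0 : 0 < y) (hy1 : y < 1) {z : ℝ} (hz : 0 < z) :
    HasDerivAt (fun z => -(y ^ z * log y) / (1 - y ^ z))
      (-(log y) ^ 2 * y ^ z / (1 - y ^ z) ^ 2) z := by
  have hpos := one_sub_rpow_pos hy0 hy1 hz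
  have hd := (hasStrictDerivAt_const_rpow hy0 z).hasDerivAt
  refine ((hd.mul_const (log y)).fun_neg.fun_div (hd.const_sub 1) hpos.ne').congr_deriv ?_
  field_simp
  ring

theorem sq_mul_deriv2_log_one_sub_rpow (hy0 : 0 < y) (hy1 : y < 1) {z : ℝ} (hz : 0 < z) :
    z ^ 2 * (-(log y) ^ 2 * y ^ z / (1 - y ^ z) ^ 2)
      = -((-log y * z / 2) / sinh (-log y * z / 2)) ^ 2 := by
  set v := -log y * z / 2
  have hv : 0 < v := div_pos (mul_pos (neg_pos.2 (log_neg hy0 hy1)) hz) two_pos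
  have hyz : y ^ z = exp (-(2 * v)) := by rw [rpow_def_of_pos hy0]; congr 1; ring
  have hsinh : sinh v ≠ 0 := (sinh_pos_iff.2 hv).ne'
  have hlog : log y * z = -(2 * v) := by ring
  rw [hyz, one_sub_exp_neg_two_mul_sq]
  field_simp
  linear_combination (-(log y * z) + 2 * v) * hlog

theorem monotoneOn_sq_mul_deriv2_log_one_sub_rpow (hy0 : 0 < y) (hy1 : y < 1) :
    MonotoneOn (fun z => z ^ 2 * (-(log y) ^ 2 * y ^ z / (1 - y ^ z) ^ 2)) (Ioi 0) := by
  intro a ha b hb hab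
  dsimp only
  rw [sq_mul_deriv2_log_one_sub_rpow hy0 hy1 ha, sq_mul_deriv2_log_one_sub_rpow hy0 hy1 hb]
  have hL : 0 < -log y := neg_pos.2 (log_neg hy0 hy1)
  have hva : 0 < -log y * a / 2 := div_pos (mul_pos hL ha) two_pos
  have hvab : -log y * a / 2 ≤ -log y * b / 2 := by gcongr
  have hanti := antitoneOn_self_div_sinh hva (hva.trans_le hvab) hvab
  have hnonneg : 0 ≤ (-log y * b / 2) / sinh (-log y * b / 2) :=
    div_nonneg (hva.trans_le hvab).le (sinh_nonneg_iff.2 (hva.trans_le hvab).le)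
  exact neg_le_neg (pow_le_pow_left₀ hnonneg hanti 2)

end

/-- Concavity/convexity of `h(z) = log((1-y^{zc})/(1-y^z))` on `(0,∞)` for
`0 < y < 1`, `c > 0`: `h` is concave when `0 < c < 1` and convex when `c > 1`. -/
theorem log_ratio_concave_convex (y c : ℝ) (hy0 : 0 < y) (hy1 : y < 1) (hc : 0 < c) :
    (c < 1 → ConcaveOn ℝ (Set.Ioi 0)
        (fun z : ℝ => Real.log ((1 - y ^ (z * c)) / (1 - y ^ z)))) ∧
    (1 < c → ConvexOn ℝ (Set.Ioi 0)
        (fun z : ℝ => Real.log ((1 - y ^ (z * c)) / (1 - y ^ z)))) := by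
  have hg := fun x (hx : 0 < x) => hasDerivAt_log_one_sub_rpow hy0 hy1 hx
  have hg' := fun x (hx : 0 < x) => hasDerivAt_deriv_log_one_sub_rpow hy0 hy1 hx
  have hmono := monotoneOn_sq_mul_deriv2_log_one_sub_rpow hy0 hy1
  have hlog_div : EqOn (fun z => log (1 - y ^ (z * c)) - log (1 - y ^ z))
      (fun z => log ((1 - y ^ (z * c)) / (1 - y ^ z))) (Ioi 0) := fun z hz =>
    (log_div (one_sub_rpow_pos hy0 hy1 (mul_pos hz hc)).ne'
      (one_sub_rpow_pos hy0 hy1 hz).ne').symm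
  refine ⟨fun hc1 => ?_, fun hc1 => ?_⟩
  · refine (concaveOn_comp_mul_sub hg hg' hc fun z hz => ?_).congr hlog_div
    exact hmono (mul_pos hz hc) hz (mul_le_of_le_one_right hz.le hc1.le)
  · refine (convexOn_comp_mul_sub hg hg' hc fun z hz => ?_).congr hlog_div
    exact hmono hz (mul_pos hz hc) (le_mul_of_one_le_right hz.le hc1.le)
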